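/- For p = 2 and β(u) = q/(1−(q+1)u) with q > 0, defined on [0, 1/(q+1)): the induced function g satisfies 1 + g(v) = 1/(1−v)^q on [0,1), i.e., Λ = 1 is finite. -/

import Mathlib

/-!
With `s = 1 - (q + 1) t`, integrating `β` gives `γ t = -(q / (q + 1)) log s`, so
`e^γ = s ^ (-q / (q + 1))` and, integrating once more, `Ψ t = 1 - s ^ (1 / (q + 1))`.
This maps `[0, 1 / (q + 1))` onto `[0, 1)`, and since `1 - Ψ t = s ^ (1 / (q + 1))` we get
`1 + g (Ψ t) = e^γ = (1 - Ψ t) ^ (-q)`.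
-/

open Real Set

theorem integral_div_one_sub_mul (q : ℝ) {c t : ℝ} (hc : c ≠ 0) (ht : 0 < 1 - c * t) :
    ∫ θ in (0:ℝ)..t, q / (1 - c * θ) = -(q / c) * log (1 - c * t) := by
  simp_rw [div_eq_mul_inv q, intervalIntegral.integral_const_mul,
    intervalIntegral.integral_comp_sub_mul (fun x => x⁻¹) hc,
    integral_inv_of_pos ht (by norm_num : (0:ℝ) < 1 - c * 0)]
  rw [mul_zero, sub_zero, log_div one_ne_zero ht.ne', log_one, smul_eq_mul]
  ring

theorem integral_one_sub_mul_rpow {c r : ℝ} (t : ℝ) (hc : c ≠ 0) (hr : -1 < r) :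
    ∫ θ in (0:ℝ)..t, (1 - c * θ) ^ r = (1 - (1 - c * t) ^ (r + 1)) / (c * (r + 1)) := by
  rw [intervalIntegral.integral_comp_sub_mul (fun x => x ^ r) hc, integral_rpow (Or.inl hr),
    mul_zero, sub_zero, one_rpow, smul_eq_mul, mul_div_assoc', inv_mul_eq_div, div_div]

theorem image_one_sub_one_sub_mul_rpow_inv {c : ℝ} (hc : 0 < c) :
    (fun t => 1 - (1 - c * t) ^ c⁻¹) '' Ico 0 (1 / c) = Ico 0 1 := by
  ext v
  constructor
  · rintro ⟨t, ⟨ht₀, ht₁⟩, rfl⟩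
    have hs : 0 < 1 - c * t := by rw [lt_div_iff₀' hc] at ht₁; linarith
    have hs₁ : 1 - c * t ≤ 1 := by nlinarith
    exact ⟨sub_nonneg.2 (rpow_le_one hs.le hs₁ (inv_nonneg.2 hc.le)),
      sub_lt_self _ (rpow_pos_of_pos hs _)⟩
  · rintro ⟨hv₀, hv₁⟩
    have hw : 0 < 1 - v := sub_pos.2 hv₁
    have hwc : (1 - v) ^ c ≤ 1 := rpow_le_one hw.le (by linarith) hc.le
    have hwc₀ : 0 < (1 - v) ^ c := rpow_pos_of_pos hw c
    refine ⟨(1 - (1 - v) ^ c) / c, ⟨div_nonneg (by linarith) hc.le, ?_⟩, ?_⟩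
    · exact div_lt_div_of_pos_right (by linarith) hc
    · dsimp only
      rw [mul_div_cancel₀ _ hc.ne', sub_sub_cancel, ← rpow_mul hw.le, mul_inv_cancel₀ hc.ne',
        rpow_one, sub_sub_cancel]

/-- p = 2, q > 0, β(u) = q/(1−(q+1)u) on [0,1/(q+1)): the induced g
satisfies 1 + g(v) = 1/(1−v)^q on [0,1), and Λ = sup Ψ = 1 is finite. -/
theorem stmt9 (q : ℝ) (hq : 0 < q)
    (β γ Ψ g : ℝ → ℝ)
    (hβ : ∀ u ∈ Set.Ico (0:ℝ) (1 / (q + 1)), β u = q / (1 - (q + 1) * u))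
    (hγ : ∀ t ∈ Set.Ico (0:ℝ) (1 / (q + 1)), γ t = ∫ θ in (0:ℝ)..t, β θ)
    (hΨ : ∀ t ∈ Set.Ico (0:ℝ) (1 / (q + 1)), Ψ t = ∫ θ in (0:ℝ)..t, Real.exp (γ θ))
    (hg : ∀ t ∈ Set.Ico (0:ℝ) (1 / (q + 1)), g (Ψ t) = Real.exp (γ t) - 1) :
    (∀ v ∈ Set.Ico (0:ℝ) 1, 1 + g v = 1 / (1 - v) ^ q) ∧
    Ψ '' Set.Ico (0:ℝ) (1 / (q + 1)) = Set.Ico (0:ℝ) 1 ∧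
    sSup (Ψ '' Set.Ico (0:ℝ) (1 / (q + 1))) = 1 := by
  have hc : 0 < q + 1 := by linarith
  have hpos : ∀ t ∈ Ico (0:ℝ) (1 / (q + 1)), 0 < 1 - (q + 1) * t := fun t ht ↦
    sub_pos.2 ((lt_div_iff₀' hc).1 ht.2)
  have hsub : ∀ t ∈ Ico (0:ℝ) (1 / (q + 1)), uIcc 0 t ⊆ Ico 0 (1 / (q + 1)) := fun t ht ↦
    (uIcc_of_le ht.1).trans_subset (Icc_subset_Ico_right ht.2)
  have hexpγ : ∀ t ∈ Ico (0:ℝ) (1 / (q + 1)),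
      exp (γ t) = (1 - (q + 1) * t) ^ (-(q / (q + 1))) := by
    intro t ht
    rw [hγ t ht, intervalIntegral.integral_congr fun θ hθ ↦ hβ θ (hsub t ht hθ),
      integral_div_one_sub_mul q hc.ne' (hpos t ht), rpow_def_of_pos (hpos t ht), mul_comm]
  have hΨ' : ∀ t ∈ Ico (0:ℝ) (1 / (q + 1)), Ψ t = 1 - (1 - (q + 1) * t) ^ (q + 1)⁻¹ := by
    intro t ht
    have hr : -(q / (q + 1)) + 1 = (q + 1)⁻¹ := by field_simp; ring
    rw [hΨ t ht, intervalIntegral.integral_congr fun θ hθ ↦ hexpγ θ (hsub t ht hθ),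
      integral_one_sub_mul_rpow t hc.ne' (by rw [neg_lt_neg_iff, div_lt_one hc]; linarith), hr,
      mul_inv_cancel₀ hc.ne', div_one]
  have himage : Ψ '' Ico 0 (1 / (q + 1)) = Ico 0 1 := by
    rw [image_congr hΨ']
    exact image_one_sub_one_sub_mul_rpow_inv hc
  refine ⟨?_, himage, by rw [himage, csSup_Ico one_pos]⟩
  rintro v hv
  obtain ⟨t, ht, rfl⟩ := himage.symm ▸ hv
  rw [hg t ht, hexpγ t ht, hΨ' t ht, sub_sub_cancel, ← rpow_mul (hpos t ht).le, one_div,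
    ← rpow_neg (hpos t ht).le]
  ring_nf
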